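/- arXiv:2410.09138 — 3 statements merged into one kernel-verified Lean document; each statement's English description precedes it below -/
import Mathlib

section
/- There exist infinitely many pairs of integers 0 < x < y with y > x + 3 such that lcm{x, x+1, x+2, ..., x+k-1} > lcm{y, y+1, ..., y+k} for some k ≥ 3 depending on the pair. -/
/-- A multiple of `d` exists in `[a, b]` when the interval is long enough. -/
lemma erdos678_exists_dvd_mem_Icc (d a b : ℕ) (hd : 0 < d) (h : a + d ≤ b + 1) :
    ∃ c ∈ Finset.Icc a b, d ∣ c := by
  refine ⟨(a + d - 1) / d * d, ?_, dvd_mul_left d _⟩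
  have h1 : a + d - 1 < (a + d - 1) / d * d + d := Nat.lt_div_mul_add hd
  have h2 : (a + d - 1) / d * d ≤ a + d - 1 := Nat.div_mul_le_self _ _
  rw [Finset.mem_Icc]
  omega

/-- If a prime power divides the lcm of a finset of nonzero naturals,
it divides one of the elements. -/
lemma erdos678_ppow_dvd_lcm {p n : ℕ} (hp : p.Prime) (hn : n ≠ 0) (S : Finset ℕ)
    (h0 : ∀ s ∈ S, s ≠ 0) (h : p ^ n ∣ S.lcm id) : ∃ s ∈ S, p ^ n ∣ s := by
  induction S using Finset.induction_on with
  | empty =>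
    exfalso
    simp only [Finset.lcm_empty, Nat.dvd_one] at h
    have h1 := hp.one_lt
    have h2 : p ^ 1 ≤ p ^ n := Nat.pow_le_pow_right (by omega) (by omega)
    simp at h2
    omega
  | @insert a S ha ih =>
    rw [Finset.lcm_insert] at h
    have ha0 : a ≠ 0 := h0 a (Finset.mem_insert_self a S)
    have hS0 : ∀ s ∈ S, s ≠ 0 := fun s hs => h0 s (Finset.mem_insert_of_mem hs)
    have hL0 : S.lcm id ≠ 0 := by
      intro hz
      rw [Finset.lcm_eq_zero_iff] at hz
      obtain ⟨s, hs, hsz⟩ := hz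
      exact hS0 s (by simpa using hs) (by simpa using hsz)
    have hlcm0 : Nat.lcm a (S.lcm id) ≠ 0 := Nat.lcm_ne_zero ha0 hL0
    have hfac : n ≤ (Nat.lcm a (S.lcm id)).factorization p :=
      (Nat.Prime.pow_dvd_iff_le_factorization hp hlcm0).mp h
    rw [Nat.factorization_lcm ha0 hL0, Finsupp.sup_apply] at hfac
    rcases le_total (a.factorization p) ((S.lcm id).factorization p) with hle | hle
    · rw [sup_eq_right.mpr hle] at hfac
      obtain ⟨s, hs, hds⟩ := ih hS0 ((Nat.Prime.pow_dvd_iff_le_factorization hp hL0).mpr hfac)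
      exact ⟨s, Finset.mem_insert_of_mem hs, hds⟩
    · rw [sup_eq_left.mpr hle] at hfac
      exact ⟨a, Finset.mem_insert_self a S,
        (Nat.Prime.pow_dvd_iff_le_factorization hp ha0).mpr hfac⟩

/-- If `t ≡ p (mod p²)` and the interval `[a, e]` is long enough, then `t` divides
the lcm of `[a, e]`: indeed `t = p · v` with `p, v` coprime, each having a multiple
in the interval. -/
lemma erdos678_split_dvd (p t a e : ℕ) (hp3 : 3 ≤ p) (hres : t % (p * p) = p)
    (hlen1 : a + p ≤ e + 1) (hlen2 : a + t / p ≤ e + 1) :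
    t ∣ (Finset.Icc a e).lcm id := by
  have hdm := Nat.div_add_mod t (p * p)
  set w := t / (p * p) with hwdef
  have ht : t = p * p * w + p := by omega
  have hv : t / p = p * w + 1 := by
    rw [ht, show p * p * w + p = p * (p * w + 1) by ring]
    exact Nat.mul_div_cancel_left _ (by omega)
  have hcop : Nat.Coprime p (p * w + 1) := by
    unfold Nat.Coprime
    have h := Nat.gcd_add_mul_right_right p 1 w
    simpa [add_comm, mul_comm] using h
  obtain ⟨c1, hc1, hd1⟩ := erdos678_exists_dvd_mem_Icc p a e (by omega) hlen1
  obtain ⟨c2, hc2, hd2⟩ := erdos678_exists_dvd_mem_Icc (p * w + 1) a e (by omega)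
    (by rw [hv] at hlen2; exact hlen2)
  have h1 : p ∣ (Finset.Icc a e).lcm id := hd1.trans (Finset.dvd_lcm hc1)
  have h2 : (p * w + 1) ∣ (Finset.Icc a e).lcm id := hd2.trans (Finset.dvd_lcm hc2)
  have h3 := hcop.mul_dvd_of_dvd_of_dvd h1 h2
  rwa [show p * (p * w + 1) = t by rw [ht]; ring] at h3

lemma erdos678_hB (x N k e : ℕ) (hxk : x + k = N) (he : e + 1 = N) (hk : 20 ≤ k)
    (hr3 : N % 9 = 3) (hr5 : (N + 1) % 25 = 5) (hr7 : (N + 2) % 49 = 7)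
    (hr11 : (N + 3) % 121 = 11) (hr13 : (N + 4) % 169 = 13)
    (hl3 : x + 4 + N / 3 ≤ e + 1) (hl5 : x + 4 + (N + 1) / 5 ≤ e + 1)
    (hl7 : x + 4 + (N + 2) / 7 ≤ e + 1) (hl11 : x + 4 + (N + 3) / 11 ≤ e + 1)
    (hl13 : x + 4 + (N + 4) / 13 ≤ e + 1) :
    (Finset.Icc (x + 4) (x + 4 + k)).lcm (id : ℕ → ℕ) ∣ (Finset.Icc (x + 4) e).lcm id := by
  apply Finset.lcm_dvd
  intro t ht
  rw [Finset.mem_Icc] at ht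
  by_cases hte : t ≤ e
  · exact Finset.dvd_lcm
      (by rw [Finset.mem_Icc]; clear hr3 hr5 hr7 hr11 hr13; omega)
  · have h5 : t = N ∨ t = N + 1 ∨ t = N + 2 ∨ t = N + 3 ∨ t = N + 4 := by
      clear hr3 hr5 hr7 hr11 hr13; omega
    rcases h5 with h | h | h | h | h <;> rw [h]
    · exact erdos678_split_dvd 3 N (x + 4) e (by norm_num)
        (by rw [show (3:ℕ) * 3 = 9 by norm_num]; exact hr3)
        (by clear hr3 hr5 hr7 hr11 hr13; omega) hl3
    · exact erdos678_split_dvd 5 (N + 1) (x + 4) e (by norm_num)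
        (by rw [show (5:ℕ) * 5 = 25 by norm_num]; exact hr5)
        (by clear hr3 hr5 hr7 hr11 hr13; omega) hl5
    · exact erdos678_split_dvd 7 (N + 2) (x + 4) e (by norm_num)
        (by rw [show (7:ℕ) * 7 = 49 by norm_num]; exact hr7)
        (by clear hr3 hr5 hr7 hr11 hr13; omega) hl7
    · exact erdos678_split_dvd 11 (N + 3) (x + 4) e (by norm_num)
        (by rw [show (11:ℕ) * 11 = 121 by norm_num]; exact hr11)
        (by clear hr3 hr5 hr7 hr11 hr13; omega) hl11
    · exact erdos678_split_dvd 13 (N + 4) (x + 4) e (by norm_num)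
        (by rw [show (13:ℕ) * 13 = 169 by norm_num]; exact hr13)
        (by clear hr3 hr5 hr7 hr11 hr13; omega) hl13

/-- The key construction: for every `m ≥ 30`, the pair `(2^m, 2^m + 4)` works. -/
lemma erdos678_main (m : ℕ) (hm : 30 ≤ m) :
    0 < 2 ^ m ∧ 2 ^ m < 2 ^ m + 4 ∧ 2 ^ m + 3 < 2 ^ m + 4 ∧
      ∃ k : ℕ, 3 ≤ k ∧
        (Finset.Icc (2 ^ m) (2 ^ m + k - 1)).lcm id >
          (Finset.Icc (2 ^ m + 4) (2 ^ m + 4 + k)).lcm (id : ℕ → ℕ) := by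
  have hx30 : (1073741824 : ℕ) ≤ 2 ^ m := by
    calc (1073741824 : ℕ) = 2 ^ 30 := by norm_num
    _ ≤ 2 ^ m := Nat.pow_le_pow_right (by norm_num) hm
  set x := 2 ^ m with hxdef
  -- CRT data:  M = 9·25·49·121·169 = 225450225,
  -- r = 103319004 ≡ (3, 4, 5, 8, 9) mod (9, 25, 49, 121, 169)
  set q : ℕ := (2 * x - (5 + 103319004)) / 225450225 with hqdef
  set N : ℕ := 103319004 + 225450225 * q with hNdef
  have hN1 : N + 5 ≤ 2 * x := by rw [hNdef, hqdef]; omega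
  have hN2 : 2 * x ≤ N + 5 + 225450225 := by rw [hNdef, hqdef]; omega
  set k : ℕ := N - x with hkdef
  have hxk : x + k = N := by omega
  have hk3 : 3 ≤ k := by omega
  set e : ℕ := N - 1 with hedef
  have htop : x + k - 1 = e := by omega
  have hex : x + 6 ≤ e + 1 := by omega
  -- interval-length facts (derived before the modular facts, to keep `omega` fast)
  have hl3 : x + 4 + N / 3 ≤ e + 1 := by omega
  have hl5 : x + 4 + (N + 1) / 5 ≤ e + 1 := by omega
  have hl7 : x + 4 + (N + 2) / 7 ≤ e + 1 := by omega
  have hl11 : x + 4 + (N + 3) / 11 ≤ e + 1 := by omega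
  have hl13 : x + 4 + (N + 4) / 13 ≤ e + 1 := by omega
  have hp13 : x + 4 + 13 ≤ e + 1 := by omega
  -- the common part
  set C : Finset ℕ := Finset.Icc (x + 4) e with hCdef
  set Lc : ℕ := C.lcm id with hLcdef
  -- Step A : Lc divides the left lcm
  have hA : Lc ∣ (Finset.Icc x e).lcm id := by
    apply Finset.lcm_dvd
    intro b hb
    rw [hCdef, Finset.mem_Icc] at hb
    exact Finset.dvd_lcm (by rw [Finset.mem_Icc]; omega)
  -- Step C : 2^m = x divides the left lcm but not Lc
  have hxL : x ∣ (Finset.Icc x e).lcm id :=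
    Finset.dvd_lcm (by rw [Finset.mem_Icc]; omega)
  have hxC : ¬ x ∣ Lc := by
    intro hdvd
    rw [hxdef] at hdvd
    obtain ⟨s, hs, hds⟩ := erdos678_ppow_dvd_lcm Nat.prime_two (by omega) C
      (by intro s hs; rw [hCdef, Finset.mem_Icc] at hs; omega) hdvd
    rw [hCdef, Finset.mem_Icc] at hs
    obtain ⟨c, hc⟩ := hds
    rw [← hxdef] at hc
    rcases Nat.lt_or_ge c 2 with hc2 | hc2
    · interval_cases c <;> omega
    · have hcc : x * 2 ≤ x * c := Nat.mul_le_mul_left x hc2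
      omega
  have hLc0 : Lc ≠ 0 := fun h => hxC (h ▸ dvd_zero x)
  have hLl0 : (Finset.Icc x e).lcm id ≠ 0 := by
    intro hz
    rw [Finset.lcm_eq_zero_iff] at hz
    obtain ⟨s, hs, hsz⟩ := hz
    simp only [Finset.mem_coe, Finset.mem_Icc] at hs
    simp only [id_eq] at hsz
    omega
  have hlt : Lc < (Finset.Icc x e).lcm id :=
    lt_of_le_of_ne (Nat.le_of_dvd (Nat.pos_of_ne_zero hLl0) hA)
      (fun hEq => hxC (hEq ▸ hxL))
  have hk20 : 20 ≤ k := by omega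
  have hB : (Finset.Icc (x + 4) (x + 4 + k)).lcm (id : ℕ → ℕ) ∣ Lc := by
    rw [hLcdef, hCdef]
    exact erdos678_hB x N k e hxk (by omega) hk20
      (by rw [hNdef]; omega) (by rw [hNdef]; omega) (by rw [hNdef]; omega)
      (by rw [hNdef]; omega) (by rw [hNdef]; omega)
      hl3 hl5 hl7 hl11 hl13
  have hle : (Finset.Icc (x + 4) (x + 4 + k)).lcm (id : ℕ → ℕ) ≤ Lc :=
    Nat.le_of_dvd (Nat.pos_of_ne_zero hLc0) hB
  exact ⟨by positivity, by omega, by omega, k, hk3,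
    by rw [htop]; exact lt_of_le_of_lt hle hlt⟩

theorem erdos_678 :
    {p : ℕ × ℕ | 0 < p.1 ∧ p.1 < p.2 ∧ p.1 + 3 < p.2 ∧
      ∃ k : ℕ, 3 ≤ k ∧
        (Finset.Icc p.1 (p.1 + k - 1)).lcm id >
          (Finset.Icc p.2 (p.2 + k)).lcm (id : ℕ → ℕ)}.Infinite := by
  refine Set.infinite_of_injective_forall_mem
    (f := fun j : ℕ => (2 ^ (j + 30), 2 ^ (j + 30) + 4)) ?_ ?_
  · intro a b hab
    simp only [Prod.mk.injEq] at hab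
    have h := Nat.pow_right_injective (le_refl 2) hab.1
    omega
  · intro j
    exact erdos678_main (j + 30) (by omega)
end

section
/- Let p be a prime and n, k positive integers. If some element of {n, n+1, ..., n+k-1} is divisible by p^(⌊log_p k⌋ + 1), then the p-adic valuation of lcm{n, ..., n+k-1} equals the maximum p-adic valuation of an element of the set, and this maximum is attained by a unique element. -/
lemma padicValNat_finset_lcm (p : ℕ) (hp : p.Prime) (s : Finset ℕ)
    (hs : ∀ i ∈ s, 0 < i) :
    padicValNat p (s.lcm id) = s.sup (fun i => padicValNat p i) := by
  classical
  induction s using Finset.induction_on with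
  | empty => simp
  | @insert a s has ih =>
    have ha0 : a ≠ 0 := (hs a (Finset.mem_insert_self a s)).ne'
    have hl0 : s.lcm id ≠ 0 := by
      intro h0
      rcases (Finset.lcm_eq_zero_iff).mp h0 with ⟨x, hx, hx0⟩
      exact (hs x (Finset.mem_insert_of_mem hx)).ne' hx0
    rw [Finset.lcm_insert]
    have := Nat.factorization_lcm ha0 hl0
    have hval : padicValNat p (Nat.lcm a (s.lcm id)) =
        max (padicValNat p a) (padicValNat p (s.lcm id)) := by
      have h2 := DFunLike.congr_fun this p
      simpa [Nat.factorization_def _ hp] using h2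
    simp only [id_eq, lcm_eq_nat_lcm]
    rw [hval, ih (fun i hi => hs i (Finset.mem_insert_of_mem hi)), Finset.sup_insert]

theorem valuation_lcm_of_high_power (p n k : ℕ) (hp : p.Prime) (hn : 0 < n) (hk : 0 < k)
    (h : ∃ i ∈ Finset.Icc n (n + k - 1), p ^ (Nat.log p k + 1) ∣ i) :
    padicValNat p ((Finset.Icc n (n + k - 1)).lcm id) =
        (Finset.Icc n (n + k - 1)).sup (fun i => padicValNat p i) ∧
      ∃! i, i ∈ Finset.Icc n (n + k - 1) ∧
        padicValNat p i = (Finset.Icc n (n + k - 1)).sup (fun i => padicValNat p i) := by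
  set s := Finset.Icc n (n + k - 1) with hs
  have hpos : ∀ i ∈ s, 0 < i := by
    intro i hi
    rw [hs, Finset.mem_Icc] at hi
    omega
  have hmem : ∀ {i : ℕ}, i ∈ s → n ≤ i ∧ i ≤ n + k - 1 := by
    intro i hi; rwa [hs, Finset.mem_Icc] at hi
  set M := s.sup (fun i => padicValNat p i) with hM
  refine ⟨padicValNat_finset_lcm p hp s hpos, ?_⟩
  -- M ≥ log p k + 1
  obtain ⟨i0, hi0, hdvd⟩ := h
  have hi0ne : i0 ≠ 0 := (hpos i0 hi0).ne'
  have hle : Nat.log p k + 1 ≤ padicValNat p i0 := by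
    have := (Nat.Prime.pow_dvd_iff_le_factorization hp hi0ne).mp hdvd
    rwa [Nat.factorization_def _ hp] at this
  have hMlog : Nat.log p k + 1 ≤ M := le_trans hle (Finset.le_sup hi0)
  have hkp : k < p ^ (Nat.log p k + 1) := Nat.lt_pow_succ_log_self hp.one_lt k
  have hkM : k ≤ p ^ M := le_trans hkp.le (Nat.pow_le_pow_right hp.pos hMlog)
  -- existence of attaining element
  have hne : s.Nonempty := ⟨n, by rw [hs, Finset.mem_Icc]; omega⟩
  obtain ⟨a, haS, hav⟩ := Finset.exists_mem_eq_sup s hne (fun i => padicValNat p i)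
  refine ⟨a, ⟨haS, hav.symm⟩, ?_⟩
  rintro b ⟨hbS, hbv⟩
  by_contra hab
  have hda : p ^ M ∣ a := by
    rw [← Nat.factorization_def _ hp] at hav
    exact (Nat.Prime.pow_dvd_iff_le_factorization hp (hpos a haS).ne').mpr hav.le
  have hdb : p ^ M ∣ b := by
    rw [← Nat.factorization_def _ hp] at hbv
    exact (Nat.Prime.pow_dvd_iff_le_factorization hp (hpos b hbS).ne').mpr hbv.ge
  have ha' := hmem haS
  have hb' := hmem hbS
  -- difference
  rcases lt_or_gt_of_ne hab with hlt | hlt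
  · have : p ^ M ∣ a - b := Nat.dvd_sub hda hdb
    have h1 : p ^ M ≤ a - b := Nat.le_of_dvd (by omega) this
    omega
  · have : p ^ M ∣ b - a := Nat.dvd_sub hdb hda
    have h1 : p ^ M ≤ b - a := Nat.le_of_dvd (by omega) this
    omega
end

section
/- (Claim 2 of the paper) Let k be a positive integer, m = ∏_{p ≤ √k} p^(⌊log_p k⌋), M = lcm{1, ..., k}, and suppose x ≡ 1 (mod m), y ≡ 0 (mod m), and for each prime p with √k < p ≤ k we have x mod p ≤ p - (k mod p) with x mod p ≥ 1, and y mod p ≥ p - (k mod p). Then (y(y+1)···(y+k)) / lcm{y, ..., y+k} = M · (x(x+1)···(x+k-1)) / lcm{x, ..., x+k-1}. -/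
/-!
Compare `p`-adic valuations prime by prime. For a finite set `s` of positive integers,
`v_p (∏ s) = ∑_{j ≥ 1} #{i ∈ s | p ^ j ∣ i}` and
`v_p (lcm s) = #{j ≥ 1 | p ^ j divides some i ∈ s}`, so the claim splits into one identity for
each prime power `q = p ^ j` about the number of multiples of `q` in the windows
`{x, …, x + k - 1}` and `{y, …, y + k}`. If `q ≤ k`, the residue conditions (via `q ∣ m` when
`p ≤ √k`, and via `j = 1` otherwise) make these windows contain exactly `k / q` and `k / q + 1`
multiples of `q`; if `q > k`, each contains at most one.
-/

open Finset

section Multiples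

variable {q : ℕ}

theorem card_filter_dvd_Ioc {a b : ℕ} (hab : a ≤ b) :
    #{i ∈ Ioc a b | q ∣ i} = b / q - a / q := by
  have hsplit :
      #{i ∈ Ioc 0 a | q ∣ i} + #{i ∈ Ioc a b | q ∣ i} = #{i ∈ Ioc 0 b | q ∣ i} := by
    rw [← card_union_of_disjoint (disjoint_filter_filter (Ioc_disjoint_Ioc_of_le le_rfl)),
      ← filter_union, Ioc_union_Ioc_eq_Ioc (Nat.zero_le a) hab]
  rw [Nat.Ioc_filter_dvd_card_eq_div, Nat.Ioc_filter_dvd_card_eq_div] at hsplit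
  omega

theorem card_filter_dvd_Ioc_add (hq : 0 < q) (a n : ℕ) :
    #{i ∈ Ioc a (a + n) | q ∣ i} = n / q + if q ≤ a % q + n % q then 1 else 0 := by
  rw [card_filter_dvd_Ioc (Nat.le_add_right a n), Nat.add_div hq, add_assoc,
    Nat.add_sub_cancel_left]

theorem card_filter_dvd_Icc_eq_div {x k : ℕ} (hq : 0 < q) (hx : 1 ≤ x % q)
    (hxk : x % q + k % q ≤ q) : #{i ∈ Icc x (x + k - 1) | q ∣ i} = k / q := by
  have hx0 : 0 < x := hx.trans (Nat.mod_le x q)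
  have hpred : (x - 1) % q = x % q - 1 := by
    have hdiv : x - 1 = x % q - 1 + q * (x / q) := by have := Nat.mod_add_div x q; omega
    rw [hdiv, Nat.add_mul_mod_self_left, Nat.mod_eq_of_lt (by have := Nat.mod_lt x hq; omega)]
  have hIcc : Icc x (x + k - 1) = Ioc (x - 1) (x - 1 + k) := by
    ext; simp only [mem_Icc, mem_Ioc]; omega
  rw [hIcc, card_filter_dvd_Ioc_add hq, hpred, if_neg (by omega), add_zero]

theorem card_filter_dvd_Icc_eq_div_add_one {y k : ℕ} (hq : 0 < q)
    (hy : q ∣ y ∨ q ≤ y % q + k % q) : #{i ∈ Icc y (y + k) | q ∣ i} = k / q + 1 := by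
  have hIcc : Icc y (y + k) = insert y (Ioc y (y + k)) := by
    ext; simp only [mem_Icc, mem_insert, mem_Ioc]; omega
  have hk := Nat.mod_lt k hq
  rw [hIcc, filter_insert]
  rcases hy with hy | hy
  · rw [if_pos hy, card_insert_of_notMem (by simp), card_filter_dvd_Ioc_add hq,
      Nat.mod_eq_zero_of_dvd hy, if_neg (by omega)]
  · have hyq : ¬q ∣ y := fun h => by rw [Nat.mod_eq_zero_of_dvd h] at hy; omega
    rw [if_neg hyq, card_filter_dvd_Ioc_add hq, if_pos hy]

theorem card_filter_dvd_Icc_le_one {a b : ℕ} (hab : b < a + q) :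
    #{i ∈ Icc a b | q ∣ i} ≤ 1 := by
  refine card_le_one.mpr fun i hi j hj => ?_
  simp only [mem_filter, mem_Icc] at hi hj
  have eq_of_le : ∀ {i j}, i ≤ j → a ≤ i → j ≤ b → q ∣ i → q ∣ j → i = j :=
    fun hij hai hjb hi hj => by
      by_contra hne
      have := Nat.le_of_dvd (by omega) (Nat.dvd_sub hj hi)
      omega
  rcases le_total i j with h | h
  · exact eq_of_le h hi.1.1 hj.1.2 hi.2 hj.2
  · exact (eq_of_le h hj.1.1 hi.1.2 hj.2 hi.2).symm

end Multiples

section Factorization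

variable {p N : ℕ}

theorem card_filter_Ico_pow_dvd_eq_factorization (hp : p.Prime) {n : ℕ} (hn : n ≠ 0)
    (hN : n.factorization p < N) : #{j ∈ Ico 1 N | p ^ j ∣ n} = n.factorization p := by
  have hIcc : {j ∈ Ico 1 N | p ^ j ∣ n} = Icc 1 (n.factorization p) := by
    ext j
    simp only [mem_filter, mem_Ico, mem_Icc, hp.pow_dvd_iff_le_factorization hn]
    omega
  rw [hIcc, Nat.card_Icc, Nat.add_sub_cancel]

theorem factorization_prod_id_eq_sum_card_filter (hp : p.Prime) {s : Finset ℕ} (hs : 0 ∉ s)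
    (hN : ∀ i ∈ s, i < N) :
    (∏ i ∈ s, i).factorization p = ∑ j ∈ Ico 1 N, #{i ∈ s | p ^ j ∣ i} := by
  have hs' : ∀ i ∈ s, i ≠ 0 := fun i hi h => hs (h ▸ hi)
  rw [Nat.factorization_prod hs', Finsupp.finsetSum_apply]
  simp_rw [card_filter]
  rw [sum_comm]
  refine sum_congr rfl fun i hi => ?_
  rw [← card_filter, card_filter_Ico_pow_dvd_eq_factorization hp (hs' i hi)
    ((Nat.factorization_lt p (hs' i hi)).trans (hN i hi))]

theorem factorization_lcm_id_eq_card_filter (hp : p.Prime) {s : Finset ℕ} (hs : 0 ∉ s)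
    (hN : ∀ i ∈ s, i < N) :
    (s.lcm id).factorization p = #{j ∈ Ico 1 N | ∃ i ∈ s, p ^ j ∣ i} := by
  have hs' : ∀ i ∈ s, i ≠ 0 := fun i hi h => hs (h ▸ hi)
  have hIcc :
      {j ∈ Ico 1 N | ∃ i ∈ s, p ^ j ∣ i} = Icc 1 (s.sup fun i => i.factorization p) := by
    ext j
    simp only [mem_filter, mem_Ico, mem_Icc]
    constructor
    · rintro ⟨⟨hj, -⟩, i, hi, hdvd⟩
      exact ⟨hj, ((hp.pow_dvd_iff_le_factorization (hs' i hi)).mp hdvd).trans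
        (le_sup (f := fun i => i.factorization p) hi)⟩
    · rintro ⟨hj, hle⟩
      obtain ⟨i, hi, hji⟩ := (Finset.le_sup_iff (Nat.bot_eq_zero ▸ hj)).mp hle
      have hiN := (Nat.factorization_lt p (hs' i hi)).trans (hN i hi)
      exact ⟨⟨hj, by omega⟩, i, hi, (hp.pow_dvd_iff_le_factorization (hs' i hi)).mpr hji⟩
  rw [Finset.factorization_lcm (f := id) hs', hIcc, Nat.card_Icc, Nat.add_sub_cancel]
  rfl

end Factorization

theorem prod_mul_lcm_eq_of_forall_isPrimePow {X Y Z : Finset ℕ} (hX : 0 ∉ X) (hY : 0 ∉ Y)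
    (hZ : 0 ∉ Z)
    (h : ∀ q, IsPrimePow q →
      #{i ∈ Y | q ∣ i} + (if ∃ i ∈ X, q ∣ i then 1 else 0) =
        (if ∃ i ∈ Z, q ∣ i then 1 else 0) + #{i ∈ X | q ∣ i} +
          (if ∃ i ∈ Y, q ∣ i then 1 else 0)) :
    (∏ i ∈ Y, i) * X.lcm id = Z.lcm id * (∏ i ∈ X, i) * Y.lcm id := by
  have hprod : ∀ s : Finset ℕ, 0 ∉ s → ∏ i ∈ s, i ≠ 0 := fun s hs =>
    prod_ne_zero_iff.mpr fun i hi h => hs (h ▸ hi)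
  have hlcm : ∀ s : Finset ℕ, 0 ∉ s → s.lcm id ≠ 0 := fun s hs => by
    simpa [Finset.lcm_eq_zero_iff] using hs
  refine Nat.factorization_inj (mul_ne_zero (hprod Y hY) (hlcm X hX))
    (mul_ne_zero (mul_ne_zero (hlcm Z hZ) (hprod X hX)) (hlcm Y hY)) (Finsupp.ext fun p => ?_)
  by_cases hp : p.Prime
  swap
  · simp only [Nat.factorization_eq_zero_of_not_prime _ hp]
  set N := (X ∪ Y ∪ Z).sup id + 1
  have hN : ∀ s ⊆ X ∪ Y ∪ Z, ∀ i ∈ s, i < N := fun s hs i hi =>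
    Nat.lt_succ_of_le (le_sup (f := id) (hs hi))
  simp only [Nat.factorization_mul (hprod Y hY) (hlcm X hX),
    Nat.factorization_mul (mul_ne_zero (hlcm Z hZ) (hprod X hX)) (hlcm Y hY),
    Nat.factorization_mul (hlcm Z hZ) (hprod X hX), Finsupp.add_apply]
  rw [factorization_prod_id_eq_sum_card_filter hp hY (hN Y (by grind)),
    factorization_prod_id_eq_sum_card_filter hp hX (hN X (by grind)),
    factorization_lcm_id_eq_card_filter hp hX (hN X (by grind)),
    factorization_lcm_id_eq_card_filter hp hY (hN Y (by grind)),
    factorization_lcm_id_eq_card_filter hp hZ (hN Z (by grind))]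
  simp only [card_filter, ← sum_add_distrib]
  refine sum_congr rfl fun j hj => ?_
  simpa only [card_filter] using h _ ⟨p, j, hp.prime, (mem_Ico.mp hj).1, rfl⟩

theorem exists_mem_Icc_one_dvd_iff {q k : ℕ} (hq : 0 < q) :
    (∃ i ∈ Icc 1 k, q ∣ i) ↔ q ≤ k := by
  refine ⟨fun ⟨i, hi, hdvd⟩ => ?_, fun h => ⟨q, mem_Icc.mpr ⟨hq, h⟩, dvd_rfl⟩⟩
  rw [mem_Icc] at hi
  exact (Nat.le_of_dvd (by omega) hdvd).trans hi.2

theorem card_filter_dvd_add_ite_eq {X Y Z : Finset ℕ} {q k : ℕ} (hq : 0 < q)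
    (hZ : (∃ i ∈ Z, q ∣ i) ↔ q ≤ k)
    (hsmall : q ≤ k → #{i ∈ X | q ∣ i} = k / q ∧ #{i ∈ Y | q ∣ i} = k / q + 1)
    (hlarge : k < q → #{i ∈ X | q ∣ i} ≤ 1 ∧ #{i ∈ Y | q ∣ i} ≤ 1) :
    #{i ∈ Y | q ∣ i} + (if ∃ i ∈ X, q ∣ i then 1 else 0) =
      (if ∃ i ∈ Z, q ∣ i then 1 else 0) + #{i ∈ X | q ∣ i} +
        (if ∃ i ∈ Y, q ∣ i then 1 else 0) := by
  have hpos : ∀ s : Finset ℕ, (∃ i ∈ s, q ∣ i) ↔ 0 < #{i ∈ s | q ∣ i} := fun s => by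
    rw [card_pos, filter_nonempty_iff]
  simp only [hpos X, hpos Y, hZ]
  by_cases hqk : q ≤ k
  · obtain ⟨hX, hY⟩ := hsmall hqk
    have := Nat.div_pos hqk hq
    split_ifs <;> omega
  · obtain ⟨hX, hY⟩ := hlarge (by omega)
    split_ifs <;> omega

theorem pow_dvd_prod_pow_log {S : Finset ℕ} {p j k : ℕ} (hp : 1 < p) (hpS : p ∈ S)
    (hpjk : p ^ j ≤ k) : p ^ j ∣ ∏ r ∈ S, r ^ Nat.log r k := by
  have hk : k ≠ 0 := ((pow_pos (by omega) j).trans_le hpjk).ne'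
  exact (pow_dvd_pow p ((Nat.le_log_iff_pow_le hp hk).mpr hpjk)).trans (dvd_prod_of_mem _ hpS)

theorem card_filter_prime_pow_dvd_windows {k x y p j : ℕ} (hp : p.Prime) (hj : 0 < j)
    (hpjk : p ^ j ≤ k)
    (hxm : x ≡ 1 [MOD ∏ r ∈ (Icc 1 k).filter (fun r => r.Prime ∧ r ≤ Nat.sqrt k),
      r ^ Nat.log r k])
    (hym : y ≡ 0 [MOD ∏ r ∈ (Icc 1 k).filter (fun r => r.Prime ∧ r ≤ Nat.sqrt k),
      r ^ Nat.log r k])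
    (hres : ∀ r : ℕ, r.Prime → Nat.sqrt k < r → r ≤ k →
      1 ≤ x % r ∧ x % r ≤ r - k % r ∧ r - k % r ≤ y % r) :
    #{i ∈ Icc x (x + k - 1) | p ^ j ∣ i} = k / p ^ j ∧
      #{i ∈ Icc y (y + k) | p ^ j ∣ i} = k / p ^ j + 1 := by
  have hq : 0 < p ^ j := pow_pos hp.pos j
  have hkq := Nat.mod_lt k hq
  by_cases hps : p ≤ Nat.sqrt k
  · have hpS : p ∈ (Icc 1 k).filter (fun r => r.Prime ∧ r ≤ Nat.sqrt k) := by
      simp only [mem_filter, mem_Icc]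
      exact ⟨⟨hp.one_le, hps.trans (Nat.sqrt_le_self k)⟩, hp, hps⟩
    have hdvd := pow_dvd_prod_pow_log hp.one_lt hpS hpjk
    have hx1 : x % p ^ j = 1 := by
      rw [hxm.of_dvd hdvd, Nat.mod_eq_of_lt (Nat.one_lt_pow hj.ne' hp.one_lt)]
    exact ⟨card_filter_dvd_Icc_eq_div hq (by omega) (by omega),
      card_filter_dvd_Icc_eq_div_add_one hq
        (.inl (Nat.modEq_zero_iff_dvd.mp (hym.of_dvd hdvd)))⟩
  · have hkp : k < p ^ 2 := Nat.sqrt_lt'.mp (by omega)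
    obtain rfl : j = 1 := by
      have := (Nat.pow_lt_pow_iff_right hp.one_lt).mp (hpjk.trans_lt hkp)
      omega
    rw [pow_one] at hpjk hq hkq ⊢
    obtain ⟨hx1, hxk, hyk⟩ := hres p hp (by omega) hpjk
    exact ⟨card_filter_dvd_Icc_eq_div hq hx1 (by omega),
      card_filter_dvd_Icc_eq_div_add_one hq (.inr (by omega))⟩

theorem claim_two_general (k x y m M : ℕ) (hx : 0 < x) (hy : 0 < y)
    (hm : m = ∏ p ∈ (Finset.Icc 1 k).filter (fun p => p.Prime ∧ p ≤ Nat.sqrt k),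
      p ^ Nat.log p k)
    (hM : M = (Finset.Icc 1 k).lcm id)
    (hxm : x ≡ 1 [MOD m]) (hym : y ≡ 0 [MOD m])
    (hres : ∀ p : ℕ, p.Prime → Nat.sqrt k < p → p ≤ k →
      1 ≤ x % p ∧ x % p ≤ p - k % p ∧ p - k % p ≤ y % p) :
    (∏ i ∈ Finset.Icc y (y + k), i) * (Finset.Icc x (x + k - 1)).lcm id =
      M * (∏ i ∈ Finset.Icc x (x + k - 1), i) * (Finset.Icc y (y + k)).lcm id := by
  subst hm hM
  refine prod_mul_lcm_eq_of_forall_isPrimePow (by simp only [mem_Icc]; omega)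
    (by simp only [mem_Icc]; omega) (by simp)
    fun q hq => ?_
  obtain ⟨p, j, hp, hj, rfl⟩ := hq
  rw [← Nat.prime_iff] at hp
  have hq : 0 < p ^ j := pow_pos hp.pos j
  exact card_filter_dvd_add_ite_eq hq (exists_mem_Icc_one_dvd_iff hq)
    (card_filter_prime_pow_dvd_windows hp hj · hxm hym hres)
    fun hk => ⟨card_filter_dvd_Icc_le_one (by omega), card_filter_dvd_Icc_le_one (by omega)⟩

theorem claim_two (k x y m M : ℕ) (hk : 0 < k) (hx : 0 < x) (hy : 0 < y)
    (hm : m = ∏ p ∈ (Finset.Icc 1 k).filter (fun p => p.Prime ∧ p ≤ Nat.sqrt k),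
      p ^ Nat.log p k)
    (hM : M = (Finset.Icc 1 k).lcm id)
    (hxm : x ≡ 1 [MOD m]) (hym : y ≡ 0 [MOD m])
    (hres : ∀ p : ℕ, p.Prime → Nat.sqrt k < p → p ≤ k →
      1 ≤ x % p ∧ x % p ≤ p - k % p ∧ p - k % p ≤ y % p) :
    (∏ i ∈ Finset.Icc y (y + k), i) * (Finset.Icc x (x + k - 1)).lcm id =
      M * (∏ i ∈ Finset.Icc x (x + k - 1), i) * (Finset.Icc y (y + k)).lcm id :=
  claim_two_general k x y m M hx hy hm hM hxm hym hres
end
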